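/- arXiv:2305.02410 — 3 statements merged into one kernel-verified Lean document; each statement's English description precedes it below -/
import Mathlib

section
/- For R(s) = s − log s − 1 and fixed real c, s₀, s₁ > 0, the infimum over t > 0 of t·(R(s₀/t) + R(s₁/t) + c) equals s₀ + s₁ − 2·√(s₀·s₁)·exp(−c/2). -/
open Real

/-- The marginal perspective cost for R(s) = s − log s − 1:
inf_{t>0} t(R(s₀/t)+R(s₁/t)+c) = s₀ + s₁ − 2√(s₀s₁) exp(−c/2). -/
theorem marginal_perspective_cost_kl (c s₀ s₁ : ℝ) (h₀ : 0 < s₀) (h₁ : 0 < s₁) :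
    IsGLB {x : ℝ | ∃ t : ℝ, 0 < t ∧
        x = t * ((s₀ / t - Real.log (s₀ / t) - 1) + (s₁ / t - Real.log (s₁ / t) - 1) + c)}
      (s₀ + s₁ - 2 * Real.sqrt (s₀ * s₁) * Real.exp (-c / 2)) := by
  have hs : 0 < s₀ * s₁ := mul_pos h₀ h₁
  set a : ℝ := Real.sqrt (s₀ * s₁) * Real.exp (-c / 2) with ha
  have hapos : 0 < a := mul_pos (Real.sqrt_pos.mpr hs) (Real.exp_pos _)
  have hloga : Real.log a = (Real.log s₀ + Real.log s₁) / 2 - c / 2 := by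
    rw [ha, Real.log_mul (by positivity) (by positivity), Real.log_exp,
      Real.log_sqrt hs.le, Real.log_mul h₀.ne' h₁.ne']
    ring
  have key : a * ((s₀ / a - Real.log (s₀ / a) - 1) + (s₁ / a - Real.log (s₁ / a) - 1) + c)
      = s₀ + s₁ - 2 * Real.sqrt (s₀ * s₁) * Real.exp (-c / 2) := by
    have h2a : 2 * Real.sqrt (s₀ * s₁) * Real.exp (-c / 2) = 2 * a := by rw [ha]; ring
    rw [Real.log_div h₀.ne' hapos.ne', Real.log_div h₁.ne' hapos.ne', hloga, h2a]
    field_simp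
    ring
  constructor
  · rintro x ⟨t, ht, rfl⟩
    have hlog : Real.log (a / t) ≤ a / t - 1 :=
      Real.log_le_sub_one_of_pos (by positivity)
    have h5 : t * Real.log (a / t) ≤ a - t := by
      calc t * Real.log (a / t) ≤ t * (a / t - 1) :=
            mul_le_mul_of_nonneg_left hlog ht.le
        _ = a - t := by field_simp
    rw [Real.log_div hapos.ne' ht.ne', hloga] at h5
    have hft : t * ((s₀ / t - Real.log (s₀ / t) - 1) + (s₁ / t - Real.log (s₁ / t) - 1) + c)
        = s₀ + s₁ - t * (Real.log s₀ + Real.log s₁) + 2 * t * Real.log t - 2 * t + t * c := by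
      rw [Real.log_div h₀.ne' ht.ne', Real.log_div h₁.ne' ht.ne']
      field_simp
      ring
    have h2a : 2 * Real.sqrt (s₀ * s₁) * Real.exp (-c / 2) = 2 * a := by rw [ha]; ring
    rw [hft, h2a]
    nlinarith [h5]
  · intro b hb
    have hm : (s₀ + s₁ - 2 * Real.sqrt (s₀ * s₁) * Real.exp (-c / 2)) ∈
        {x : ℝ | ∃ t : ℝ, 0 < t ∧
          x = t * ((s₀ / t - Real.log (s₀ / t) - 1) + (s₁ / t - Real.log (s₁ / t) - 1) + c)} :=
      ⟨a, hapos, key.symm⟩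
    exact hb hm
end

section
/- For R(s) = s − log s − 1, ε > 0, fixed real c, and s₀, s₁, S > 0, the infimum over t > 0 of t·(R(s₀/t) + R(s₁/t) + ε·R(S/t) + c) equals s₀ + s₁ + ε·S − (2+ε)·(s₀·s₁)^{1/(2+ε)}·S^{ε/(2+ε)}·exp(−c/(2+ε)). -/
open Real

/-- The ε-regularised marginal perspective cost for R(s) = s − log s − 1. -/
theorem regularised_marginal_perspective_cost_kl (ε c s₀ s₁ S : ℝ)
    (hε : 0 < ε) (h₀ : 0 < s₀) (h₁ : 0 < s₁) (hS : 0 < S) :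
    IsGLB {x : ℝ | ∃ t : ℝ, 0 < t ∧
        x = t * ((s₀ / t - Real.log (s₀ / t) - 1) + (s₁ / t - Real.log (s₁ / t) - 1)
          + ε * (S / t - Real.log (S / t) - 1) + c)}
      (s₀ + s₁ + ε * S -
        (2 + ε) * ((s₀ * s₁) ^ (1 / (2 + ε)) * S ^ (ε / (2 + ε)) *
          Real.exp (-c / (2 + ε)))) := by
  have hA : (0:ℝ) < 2 + ε := by linarith
  set A : ℝ := 2 + ε with hAdef
  set T : ℝ := (s₀ * s₁) ^ (1 / A) * S ^ (ε / A) * Real.exp (-c / A) with hTdef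
  have hT : 0 < T := by
    apply mul_pos (mul_pos _ _) (Real.exp_pos _)
    · exact Real.rpow_pos_of_pos (mul_pos h₀ h₁) _
    · exact Real.rpow_pos_of_pos hS _
  have hlogT : A * Real.log T = Real.log s₀ + Real.log s₁ + ε * Real.log S - c := by
    rw [hTdef, Real.log_mul (by positivity) (Real.exp_ne_zero _),
      Real.log_mul (by positivity) (by positivity), Real.log_exp,
      Real.log_rpow (mul_pos h₀ h₁), Real.log_rpow hS,
      Real.log_mul h₀.ne' h₁.ne']
    field_simp
    ring
  -- value of the objective at t, rewritten
  have key : ∀ t : ℝ, 0 < t →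
      t * ((s₀ / t - Real.log (s₀ / t) - 1) + (s₁ / t - Real.log (s₁ / t) - 1)
          + ε * (S / t - Real.log (S / t) - 1) + c)
      = s₀ + s₁ + ε * S +
        t * (A * Real.log t - (Real.log s₀ + Real.log s₁ + ε * Real.log S) + c - A) := by
    intro t ht
    rw [Real.log_div h₀.ne' ht.ne', Real.log_div h₁.ne' ht.ne',
      Real.log_div hS.ne' ht.ne']
    field_simp
    ring
  have hvalT : s₀ + s₁ + ε * S - A * T
      = T * ((s₀ / T - Real.log (s₀ / T) - 1) + (s₁ / T - Real.log (s₁ / T) - 1)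
          + ε * (S / T - Real.log (S / T) - 1) + c) := by
    rw [key T hT]
    have : T * (A * Real.log T - (Real.log s₀ + Real.log s₁ + ε * Real.log S) + c - A)
        = T * (-A) := by
      rw [hlogT]; ring
    rw [this]; ring
  constructor
  · -- lower bound
    rintro x ⟨t, ht, rfl⟩
    rw [key t ht]
    have hlog : Real.log (T / t) ≤ T / t - 1 :=
      Real.log_le_sub_one_of_pos (div_pos hT ht)
    rw [Real.log_div hT.ne' ht.ne'] at hlog
    have h2 : t * (Real.log T - Real.log t) ≤ T - t := by
      have := mul_le_mul_of_nonneg_left hlog ht.le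
      calc t * (Real.log T - Real.log t) ≤ t * (T / t - 1) := this
        _ = T - t := by field_simp
    -- show s₀+s₁+εS - A*T ≤ s₀+s₁+εS + t*(A log t - K + c - A)
    have hK : A * Real.log t - (Real.log s₀ + Real.log s₁ + ε * Real.log S) + c
        = A * (Real.log t - Real.log T) := by
      linarith [hlogT]
    nlinarith [mul_le_mul_of_nonneg_left h2 hA.le, hK]
  · -- greatest lower bound: the value is attained at T
    intro b hb
    exact hb ⟨T, hT, hvalT⟩
end

section
/- For R(s) = s − log s − 1, c ∈ ℝ, and s₀, s₁ > 0, the dual representation holds: s₀ + s₁ − 2√(s₀s₁)exp(−c/2) = sup over pairs (ψ₀,ψ₁) with ψ₀ < 1, ψ₁ < 1 and −log(1−ψ₀) − log(1−ψ₁) ≤ c of (s₀·ψ₀ + s₁·ψ₁). -/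
open Real

/-- Dual representation of the marginal perspective cost for R(s) = s − log s − 1. -/
theorem marginal_perspective_dual (c s₀ s₁ : ℝ) (h₀ : 0 < s₀) (h₁ : 0 < s₁) :
    IsLUB {x : ℝ | ∃ ψ₀ ψ₁ : ℝ, ψ₀ < 1 ∧ ψ₁ < 1 ∧
        (-Real.log (1 - ψ₀)) + (-Real.log (1 - ψ₁)) ≤ c ∧
        x = s₀ * ψ₀ + s₁ * ψ₁}
      (s₀ + s₁ - 2 * Real.sqrt (s₀ * s₁) * Real.exp (-c / 2)) := by
  set k : ℝ := Real.sqrt (s₀ * s₁) * Real.exp (-c / 2) with hkdef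
  have hk : 0 < k := by
    apply mul_pos (Real.sqrt_pos.mpr (mul_pos h₀ h₁)) (Real.exp_pos _)
  have hk2 : k ^ 2 = s₀ * s₁ * Real.exp (-c) := by
    rw [hkdef, mul_pow, Real.sq_sqrt (mul_pos h₀ h₁).le, ← Real.exp_nat_mul]
    ring_nf
  constructor
  · rintro x ⟨ψ₀, ψ₁, hψ₀, hψ₁, hc, rfl⟩
    set a : ℝ := 1 - ψ₀ with hadef
    set b : ℝ := 1 - ψ₁ with hbdef
    have ha : 0 < a := by simp [hadef]; linarith
    have hb : 0 < b := by simp [hbdef]; linarith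
    have hab : Real.exp (-c) ≤ a * b := by
      rw [← Real.exp_log (mul_pos ha hb)]
      apply Real.exp_le_exp.mpr
      rw [Real.log_mul ha.ne' hb.ne']
      linarith
    have h4 : 4 * k ^ 2 ≤ 4 * ((s₀ * a) * (s₁ * b)) := by
      have := mul_le_mul_of_nonneg_left hab (by positivity : (0:ℝ) ≤ 4 * (s₀ * s₁))
      nlinarith
    have hgoal : 2 * k ≤ s₀ * a + s₁ * b := by
      nlinarith [sq_nonneg (s₀ * a - s₁ * b), mul_pos h₀ ha, mul_pos h₁ hb, hk.le]
    have : s₀ * ψ₀ + s₁ * ψ₁ = s₀ + s₁ - (s₀ * a + s₁ * b) := by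
      rw [hadef, hbdef]; ring
    rw [this]
    linarith
  · intro ub hub
    have hmem : s₀ + s₁ - 2 * k ∈ {x : ℝ | ∃ ψ₀ ψ₁ : ℝ, ψ₀ < 1 ∧ ψ₁ < 1 ∧
        (-Real.log (1 - ψ₀)) + (-Real.log (1 - ψ₁)) ≤ c ∧
        x = s₀ * ψ₀ + s₁ * ψ₁} := by
      refine ⟨1 - k / s₀, 1 - k / s₁, by nlinarith [div_pos hk h₀], by nlinarith [div_pos hk h₁], ?_, ?_⟩
      · have e0 : (1 : ℝ) - (1 - k / s₀) = k / s₀ := by ring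
        have e1 : (1 : ℝ) - (1 - k / s₁) = k / s₁ := by ring
        rw [e0, e1]
        have : Real.log (k / s₀) + Real.log (k / s₁) = -c := by
          rw [← Real.log_mul (by positivity) (by positivity)]
          have : k / s₀ * (k / s₁) = Real.exp (-c) := by
            field_simp
            nlinarith [hk2]
          rw [this, Real.log_exp]
        linarith
      · field_simp
        ring
    linarith [hub hmem]
end
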